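/- For all real β with 0 < β ≤ 1 and all real α, -Re ∫_{-∞}^{∞} Li_1(β e^{2iαx - x²}) dx < -Re ∫_{-∞}^{∞} Li_1(-β e^{2iαx - x²}) dx, provided β < 1 or α ≠ 0 (to avoid the singularity when β = 1, interpret via the convergent improper integral). -/

import Mathlib

open Complex MeasureTheory

noncomputable def Li1 (z : ℂ) : ℂ := -Complex.log (1 - z)

/-!
For `x ≠ 0` the argument `z = c e^{2iαx - x²}` has `|z| < 1`, so `Li₁(z) = ∑ zⁿ / n`. Each term
is a Gaussian integral, `∫ (c e^{2iαx - x²})ⁿ / n dx = cⁿ √(π/n) e^{-nα²} / n`, and the integrals of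
the absolute values are at most `√π n^{-3/2}`, which is summable; this justifies integrating termwise
for every `|c| ≤ 1`. For `c = ±β` the difference of the two sides of the inequality is then
`∑ (βⁿ - (-β)ⁿ) √(π/n) e^{-nα²} / n`, a series of nonnegative terms whose first term
`2β √π e^{-α²}` is positive.
-/

open Real

theorem hasSum_Li1 {z : ℂ} (hz : ‖z‖ < 1) : HasSum (fun n : ℕ ↦ z ^ n / n) (Li1 z) :=
  hasSum_taylorSeries_neg_log hz

noncomputable def gaussianLi1Coeff (α : ℝ) (n : ℕ) : ℝ := √(π / n) * rexp (-n * α ^ 2) / n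

lemma gaussianLi1Coeff_nonneg (α : ℝ) (n : ℕ) : 0 ≤ gaussianLi1Coeff α n := by
  unfold gaussianLi1Coeff; positivity

lemma gaussianLi1Coeff_one_pos (α : ℝ) : 0 < gaussianLi1Coeff α 1 := by
  unfold gaussianLi1Coeff; positivity

lemma summable_sqrt_pi_div_div : Summable fun n : ℕ ↦ √(π / n) / n := by
  refine ((summable_nat_rpow_inv.mpr (by norm_num : (1 : ℝ) < 3 / 2)).mul_left √π).congr
    fun n ↦ ?_
  rcases n.eq_zero_or_pos with rfl | hn
  · simp
  have hn : (0 : ℝ) < n := by exact_mod_cast hn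
  rw [show (3 / 2 : ℝ) = 1 / 2 + 1 by norm_num, rpow_add hn, rpow_one, ← sqrt_eq_rpow,
    sqrt_div' _ hn.le, div_div, div_eq_mul_inv]

lemma norm_cexp_gaussianWave (α x : ℝ) : ‖cexp (2 * I * α * x - x ^ 2)‖ = rexp (-x ^ 2) := by
  rw [norm_exp]; congr 1; simp [← ofReal_pow]

lemma nat_mul_gaussianWave (α x : ℝ) (n : ℕ) :
    n * (2 * I * α * x - x ^ 2) = -n * x ^ 2 + 2 * I * α * n * x + 0 := by ring

lemma integrable_cexp_nat_mul_gaussianWave (α : ℝ) {n : ℕ} (hn : n ≠ 0) :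
    Integrable fun x : ℝ ↦ cexp (n * (2 * I * α * x - x ^ 2)) := by
  simp_rw [nat_mul_gaussianWave]
  exact integrable_cexp_quadratic' (by simpa using Nat.pos_of_ne_zero hn) _ _

lemma integral_cexp_nat_mul_gaussianWave (α : ℝ) {n : ℕ} (hn : n ≠ 0) :
    ∫ x : ℝ, cexp (n * (2 * I * α * x - x ^ 2)) = (√(π / n) * rexp (-n * α ^ 2) : ℝ) := by
  have hn' : (n : ℂ) ≠ 0 := by exact_mod_cast hn
  have hexp : 0 - (2 * I * α * n) ^ 2 / (4 * -n) = ((-n * α ^ 2 : ℝ) : ℂ) := by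
    push_cast
    field_simp
    linear_combination (4 * α ^ 2 * n) * I_sq
  simp_rw [nat_mul_gaussianWave]
  rw [integral_cexp_quadratic (by simpa using Nat.pos_of_ne_zero hn), neg_neg, hexp,
    ← ofReal_exp, ofReal_mul, sqrt_eq_rpow, ofReal_cpow (by positivity)]
  norm_num

lemma integral_pow_mul_cexp_gaussianWave_div (α : ℝ) (c : ℂ) (n : ℕ) :
    ∫ x : ℝ, (c * cexp (2 * I * α * x - x ^ 2)) ^ n / n = c ^ n * gaussianLi1Coeff α n := by
  rcases eq_or_ne n 0 with rfl | hn
  · simp [gaussianLi1Coeff]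
  simp_rw [mul_pow, ← Complex.exp_nat_mul, mul_div_right_comm, integral_const_mul,
    integral_cexp_nat_mul_gaussianWave α hn, gaussianLi1Coeff]
  push_cast
  ring

lemma integrable_pow_mul_cexp_gaussianWave_div (α : ℝ) (c : ℂ) (n : ℕ) :
    Integrable fun x : ℝ ↦ (c * cexp (2 * I * α * x - x ^ 2)) ^ n / n := by
  rcases eq_or_ne n 0 with rfl | hn
  · simp
  simp_rw [mul_pow, ← Complex.exp_nat_mul, mul_div_right_comm]
  exact (integrable_cexp_nat_mul_gaussianWave α hn).const_mul _

lemma integral_norm_pow_mul_cexp_gaussianWave_div (α : ℝ) (c : ℂ) (n : ℕ) :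
    ∫ x : ℝ, ‖(c * cexp (2 * I * α * x - x ^ 2)) ^ n / n‖ = ‖c‖ ^ n * (√(π / n) / n) := by
  simp_rw [norm_div, norm_pow, norm_mul, norm_cexp_gaussianWave, mul_pow, ← Real.exp_nat_mul,
    Complex.norm_natCast, mul_div_right_comm, integral_const_mul, mul_neg, ← neg_mul,
    integral_gaussian]
  ring

lemma norm_mul_cexp_gaussianWave_lt_one (α : ℝ) {c : ℂ} (hc : ‖c‖ ≤ 1) {x : ℝ} (hx : x ≠ 0) :
    ‖c * cexp (2 * I * α * x - x ^ 2)‖ < 1 := by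
  rw [norm_mul, norm_cexp_gaussianWave]
  calc ‖c‖ * rexp (-x ^ 2) ≤ 1 * rexp (-x ^ 2) := by gcongr
    _ < 1 := by rw [one_mul, exp_lt_one_iff, neg_lt_zero]; positivity

theorem hasSum_integral_Li1_mul_cexp_gaussianWave (α : ℝ) {c : ℂ} (hc : ‖c‖ ≤ 1) :
    HasSum (fun n ↦ c ^ n * gaussianLi1Coeff α n)
      (∫ x : ℝ, Li1 (c * cexp (2 * I * α * x - x ^ 2))) := by
  have hseries : ∀ᵐ x : ℝ, Li1 (c * cexp (2 * I * α * x - x ^ 2)) =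
      ∑' n : ℕ, (c * cexp (2 * I * α * x - x ^ 2)) ^ n / n := by
    filter_upwards [Measure.ae_ne volume 0] with x hx
    exact (hasSum_Li1 (norm_mul_cexp_gaussianWave_lt_one α hc hx)).tsum_eq.symm
  have hsummable : Summable fun n : ℕ ↦
      ∫ x : ℝ, ‖(c * cexp (2 * I * α * x - x ^ 2)) ^ n / n‖ := by
    simp_rw [integral_norm_pow_mul_cexp_gaussianWave_div]
    refine summable_sqrt_pi_div_div.of_nonneg_of_le (fun n ↦ by positivity) fun n ↦ ?_
    exact mul_le_of_le_one_left (by positivity) (pow_le_one₀ (norm_nonneg c) hc)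
  rw [integral_congr_ae hseries]
  simpa only [integral_pow_mul_cexp_gaussianWave_div] using
    hasSum_integral_of_summable_integral_norm
      (integrable_pow_mul_cexp_gaussianWave_div α c) hsummable

theorem hasSum_re_integral_Li1_mul_cexp_gaussianWave (α : ℝ) {b : ℝ} (hb : |b| ≤ 1) :
    HasSum (fun n ↦ b ^ n * gaussianLi1Coeff α n)
      (∫ x : ℝ, Li1 (b * cexp (2 * I * α * x - x ^ 2))).re := by
  simpa [← ofReal_pow, ← ofReal_mul] using
    hasSum_re (hasSum_integral_Li1_mul_cexp_gaussianWave α (c := b) (by simpa using hb))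

theorem zminus_dominates_general (β α : ℝ) (h0 : 0 < β) (h1 : β ≤ 1) :
    -(∫ x : ℝ, Li1 ((β : ℂ) *
        Complex.exp (2 * Complex.I * (α : ℂ) * (x : ℂ) - (x : ℂ) ^ 2))).re
    < -(∫ x : ℝ, Li1 (-(β : ℂ) *
        Complex.exp (2 * Complex.I * (α : ℂ) * (x : ℂ) - (x : ℂ) ^ 2))).re := by
  have hβ : |β| ≤ 1 := by rwa [abs_of_pos h0]
  rw [← ofReal_neg, neg_lt_neg_iff]
  refine hasSum_lt (i := 1) (fun n ↦ ?_) ?_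
    (hasSum_re_integral_Li1_mul_cexp_gaussianWave α (b := -β) (by rwa [abs_neg]))
    (hasSum_re_integral_Li1_mul_cexp_gaussianWave α hβ)
  · have : (-β) ^ n ≤ β ^ n := (le_abs_self _).trans (by rw [abs_pow, abs_neg, abs_of_pos h0])
    exact mul_le_mul_of_nonneg_right this (gaussianLi1Coeff_nonneg α n)
  · simpa using mul_lt_mul_of_pos_right (by linarith : -β < β) (gaussianLi1Coeff_one_pos α)

/-- For `0 < β ≤ 1` (avoiding the singular case `β = 1, α = 0`),
`-Re ∫ Li₁(β e^{2iαx-x²}) dx < -Re ∫ Li₁(-β e^{2iαx-x²}) dx`: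
in the lattice path model `Z₋` dominates `Z₊` when `A ≤ 1`. -/
theorem zminus_dominates (β α : ℝ) (h0 : 0 < β) (h1 : β ≤ 1) (h : β < 1 ∨ α ≠ 0) :
    -(∫ x : ℝ, Li1 ((β : ℂ) *
        Complex.exp (2 * Complex.I * (α : ℂ) * (x : ℂ) - (x : ℂ) ^ 2))).re
    < -(∫ x : ℝ, Li1 (-(β : ℂ) *
        Complex.exp (2 * Complex.I * (α : ℂ) * (x : ℂ) - (x : ℂ) ^ 2))).re :=
  zminus_dominates_general β α h0 h1
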